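/- arXiv:1610.04430 — 2 statements merged into one kernel-verified Lean document; each statement's English description precedes it below -/
import Mathlib

section
/- Let w be a positive integer and let (a_1, …, a_w) and (b_1, …, b_w) be two sequences of nonnegative reals with equal sums ∑ a_i = ∑ b_i, both sorted in ascending order. Suppose all values a_i, b_i lie in a finite set D ⊆ [0, h] such that any two distinct elements of D differ by at least β > 0. If α ≤ β/(β+h), then a_{⌈αw⌉} ≤ b_{w−⌈αw⌉+1}. Consequently, the ⌈αw⌉ smallest values of the first sequence are each at most the corresponding value among the ⌈αw⌉ largest values of the second sequence. -/
/-- Two ascending sequences of container heights with equal sums, taking values in a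
`β`-separated set `D ⊆ [0,h]`: for `α ≤ β/(β+h)`, the `⌈αw⌉`-th smallest value of the first
is at most the `⌈αw⌉`-th largest value of the second, and consequently each of the `⌈αw⌉`
smallest values of the first is at most the corresponding value among the `⌈αw⌉` largest
values of the second. -/
theorem container_reordering (w : ℕ) (hw : 1 ≤ w) (h β α : ℝ)
    (hh : 0 < h) (hβ : 0 < β) (hα0 : 0 < α) (hαβ : α ≤ β / (β + h))
    (D : Set ℝ) (hD : D ⊆ Set.Icc 0 h)
    (hsep : ∀ x ∈ D, ∀ y ∈ D, x ≠ y → β ≤ |x - y|)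
    (a b : ℕ → ℝ)
    (haD : ∀ i, 1 ≤ i → i ≤ w → a i ∈ D) (hbD : ∀ i, 1 ≤ i → i ≤ w → b i ∈ D)
    (hamono : ∀ i j, 1 ≤ i → i ≤ j → j ≤ w → a i ≤ a j)
    (hbmono : ∀ i j, 1 ≤ i → i ≤ j → j ≤ w → b i ≤ b j)
    (hsum : ∑ i ∈ Finset.Icc 1 w, a i = ∑ i ∈ Finset.Icc 1 w, b i) :
    a ⌈α * (w : ℝ)⌉₊ ≤ b (w - ⌈α * (w : ℝ)⌉₊ + 1) ∧
    ∀ i, 1 ≤ i → i ≤ ⌈α * (w : ℝ)⌉₊ → a i ≤ b (w - ⌈α * (w : ℝ)⌉₊ + i) := by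
  set k := ⌈α * (w : ℝ)⌉₊ with hkdef
  have hwpos : (1 : ℝ) ≤ (w : ℝ) := by exact_mod_cast hw
  have hβh : 0 < β + h := by linarith
  have hα1 : α < 1 := lt_of_le_of_lt hαβ (by rw [div_lt_one hβh]; linarith)
  have hk1 : 1 ≤ k := Nat.ceil_pos.mpr (by positivity)
  have hkw : k ≤ w := Nat.ceil_le.mpr (by nlinarith)
  have hkub : (k : ℝ) < α * w + 1 := Nat.ceil_lt_add_one (by positivity)
  have hklb : α * w ≤ (k : ℝ) := Nat.le_ceil _
  have ha0 : ∀ i, 1 ≤ i → i ≤ w → 0 ≤ a i := fun i h1 h2 => (hD (haD i h1 h2)).1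
  have hbh : ∀ i, 1 ≤ i → i ≤ w → b i ≤ h := fun i h1 h2 => (hD (hbD i h1 h2)).2
  set m := w - k + 1 with hmdef
  have hm1 : 1 ≤ m := by omega
  have hmw : m ≤ w := by omega
  have key : a k ≤ b m := by
    by_contra hcon
    push_neg at hcon
    have hβle : β ≤ a k - b m := by
      have := hsep (a k) (haD k hk1 hkw) (b m) (hbD m hm1 hmw) (by intro e; rw [e] at hcon; exact lt_irrefl _ hcon)
      rwa [abs_of_pos (by linarith)] at this
    have hrw : Finset.Icc 1 w = Finset.Ioc 0 w := by
      ext i; simp [Finset.mem_Icc, Finset.mem_Ioc]; omega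
    -- lower bound for sum of a
    have hSa : (m : ℝ) * a k ≤ ∑ i ∈ Finset.Icc 1 w, a i := by
      rw [hrw]
      have hsub : Finset.Ioc (k-1) w ⊆ Finset.Ioc 0 w := by
        intro i hi; simp only [Finset.mem_Ioc] at *; omega
      have h1 : ∑ i ∈ Finset.Ioc (k-1) w, a i ≤ ∑ i ∈ Finset.Ioc 0 w, a i := by
        apply Finset.sum_le_sum_of_subset_of_nonneg hsub
        intro i hi _; simp only [Finset.mem_Ioc] at hi; exact ha0 i (by omega) hi.2
      have h2 : (m : ℝ) * a k ≤ ∑ i ∈ Finset.Ioc (k-1) w, a i := by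
        have : ∑ i ∈ Finset.Ioc (k-1) w, a k ≤ ∑ i ∈ Finset.Ioc (k-1) w, a i := by
          apply Finset.sum_le_sum
          intro i hi; simp only [Finset.mem_Ioc] at hi
          exact hamono k i hk1 (by omega) hi.2
        rwa [Finset.sum_const, Nat.card_Ioc, nsmul_eq_mul, show w - (k-1) = m by omega] at this
      linarith
    -- upper bound for sum of b
    have hSb : ∑ i ∈ Finset.Icc 1 w, b i ≤ (m : ℝ) * b m + ((k - 1 : ℕ) : ℝ) * h := by
      rw [hrw]
      have hsplit : ∑ i ∈ Finset.Ioc 0 m, b i + ∑ i ∈ Finset.Ioc m w, b i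
          = ∑ i ∈ Finset.Ioc 0 w, b i :=
        Finset.sum_Ioc_consecutive _ (by omega) hmw
      rw [← hsplit]
      have h1 : ∑ i ∈ Finset.Ioc 0 m, b i ≤ (m : ℝ) * b m := by
        have : ∑ i ∈ Finset.Ioc 0 m, b i ≤ ∑ i ∈ Finset.Ioc 0 m, b m := by
          apply Finset.sum_le_sum
          intro i hi; simp only [Finset.mem_Ioc] at hi
          exact hbmono i m hi.1 hi.2 hmw
        rwa [Finset.sum_const, Nat.card_Ioc, nsmul_eq_mul, Nat.sub_zero] at this
      have h2 : ∑ i ∈ Finset.Ioc m w, b i ≤ ((k - 1 : ℕ) : ℝ) * h := by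
        have : ∑ i ∈ Finset.Ioc m w, b i ≤ ∑ i ∈ Finset.Ioc m w, h := by
          apply Finset.sum_le_sum
          intro i hi; simp only [Finset.mem_Ioc] at hi
          exact hbh i (by omega) hi.2
        rwa [Finset.sum_const, Nat.card_Ioc, nsmul_eq_mul, show w - m = k - 1 by omega] at this
      linarith
    have hcomb : (m : ℝ) * a k ≤ (m : ℝ) * b m + ((k - 1 : ℕ) : ℝ) * h := by
      rw [hsum] at hSa; linarith
    have hmr : (m : ℝ) = (w : ℝ) - (k : ℝ) + 1 := by
      rw [hmdef]; push_cast [Nat.cast_sub hkw]; ring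
    have hk1r : ((k - 1 : ℕ) : ℝ) = (k : ℝ) - 1 := by
      push_cast [Nat.cast_sub hk1]; ring
    rw [hmr, hk1r] at hcomb
    have hαle : α * (β + h) ≤ β := (le_div_iff₀ hβh).mp hαβ
    have hMpos : (0 : ℝ) < (w : ℝ) - (k : ℝ) + 1 := by nlinarith
    nlinarith [mul_le_mul_of_nonneg_left hβle (le_of_lt hMpos)]
  refine ⟨key, fun i h1 h2 => ?_⟩
  calc a i ≤ a k := hamono i k h1 h2 hkw
    _ ≤ b m := key
    _ ≤ b (w - k + i) := hbmono m (w - k + i) hm1 (by omega) (by omega)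
end

section
/- Let w ∈ ℕ, h > 0, β > 0, α ≤ β/(β+h), and sorted sequences a, b : {1,…,w} → [0,h] with ∑a = ∑b. If a_{⌈αw⌉} ≥ b_{w−⌈αw⌉+1} + β, then w·β ≤ (β+h)·(⌈αw⌉−1), which contradicts ⌈αw⌉−1 < αw and α ≤ β/(β+h). Hence a_{⌈αw⌉} < b_{w−⌈αw⌉+1} + β. -/
/-!
Put `k = ⌈αw⌉` and `m = w - k + 1`. If `a_k ≥ b_m + β`, then the last `m` terms of `a` are all at
least `b_m + β`, while `∑ b` is at most `m·b_m` (first `m` terms) plus `(k - 1)·h` (the rest).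
Equal sums force `mβ ≤ (k - 1)h`, i.e. `wβ ≤ (k - 1)(β + h)`; but `k - 1 < αw` and
`α(β + h) ≤ β` give `(k - 1)(β + h) < wβ`.
-/

open Finset

section SortedSums

variable {M : Type*} [AddCommMonoid M] [Preorder M] [AddLeftMono M]

theorem card_nsmul_le_sum_Icc_of_monotoneOn {a : ℕ → M} {w k : ℕ} (hk : 1 ≤ k)
    (ha0 : ∀ i ∈ Icc 1 w, 0 ≤ a i) (ha : MonotoneOn a (Set.Icc 1 w)) :
    (w + 1 - k) • a k ≤ ∑ i ∈ Icc 1 w, a i := by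
  have htail : (w + 1 - k) • a k ≤ ∑ i ∈ Icc k w, a i := by
    rw [← Nat.card_Icc]
    refine card_nsmul_le_sum _ _ _ fun i hi => ?_
    obtain ⟨hki, hiw⟩ := mem_Icc.mp hi
    exact ha ⟨hk, hki.trans hiw⟩ ⟨hk.trans hki, hiw⟩ hki
  refine htail.trans (sum_le_sum_of_subset_of_nonneg (Icc_subset_Icc_left hk) ?_)
  exact fun i hi _ => ha0 i hi

theorem sum_Icc_le_nsmul_add_nsmul {b : ℕ → M} {w m : ℕ} {h : M} (hm : m ≤ w)
    (hbh : ∀ i ∈ Icc 1 w, b i ≤ h) (hb : MonotoneOn b (Set.Icc 1 w)) :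
    ∑ i ∈ Icc 1 w, b i ≤ m • b m + (w - m) • h := by
  rw [← zero_add (1 : ℕ), Icc_add_one_left_eq_Ioc, ← sum_Ioc_consecutive b (Nat.zero_le m) hm]
  refine add_le_add ?_ ?_
  · refine (sum_le_card_nsmul (Ioc 0 m) b (b m) fun i hi => ?_).trans_eq (by simp)
    obtain ⟨hi0, him⟩ := mem_Ioc.mp hi
    exact hb ⟨hi0, him.trans hm⟩ ⟨hi0.trans_le him, hm⟩ him
  · rw [← Nat.card_Ioc]
    refine sum_le_card_nsmul _ _ _ fun i hi => ?_
    obtain ⟨hmi, hiw⟩ := mem_Ioc.mp hi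
    exact hbh i (mem_Icc.mpr ⟨by omega, hiw⟩)

end SortedSums

theorem ceil_mul_sub_one_mul_lt {α β h w : ℝ} (hα : 0 ≤ α) (hw : 0 < w) (hβh : 0 < β + h)
    (hαβ : α ≤ β / (β + h)) : ((⌈α * w⌉₊ : ℝ) - 1) * (β + h) < w * β := by
  have hceil : (⌈α * w⌉₊ : ℝ) - 1 < α * w := by
    linarith [Nat.ceil_lt_add_one (mul_nonneg hα hw.le)]
  calc ((⌈α * w⌉₊ : ℝ) - 1) * (β + h) < α * w * (β + h) := by gcongr
    _ = w * (α * (β + h)) := by ring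
    _ ≤ w * β := by gcongr; exact (le_div_iff₀ hβh).mp hαβ

/-- Core counting inequality: for ascending sequences `a, b : {1,…,w} → [0,h]` with equal sums
and `α ≤ β/(β+h)`, assuming `a_{⌈αw⌉} ≥ b_{w-⌈αw⌉+1} + β` leads to
`w·β ≤ (β+h)·(⌈αw⌉-1)`, contradicting `⌈αw⌉-1 < αw` and `α ≤ β/(β+h)`.
Hence `a_{⌈αw⌉} < b_{w-⌈αw⌉+1} + β`. -/
theorem container_counting (w : ℕ) (hw : 1 ≤ w) (h β α : ℝ)
    (hh : 0 < h) (hβ : 0 < β) (hα0 : 0 < α) (hαβ : α ≤ β / (β + h))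
    (a b : ℕ → ℝ)
    (haI : ∀ i, 1 ≤ i → i ≤ w → a i ∈ Set.Icc 0 h)
    (hbI : ∀ i, 1 ≤ i → i ≤ w → b i ∈ Set.Icc 0 h)
    (hamono : ∀ i j, 1 ≤ i → i ≤ j → j ≤ w → a i ≤ a j)
    (hbmono : ∀ i j, 1 ≤ i → i ≤ j → j ≤ w → b i ≤ b j)
    (hsum : ∑ i ∈ Finset.Icc 1 w, a i = ∑ i ∈ Finset.Icc 1 w, b i) :
    a ⌈α * (w : ℝ)⌉₊ < b (w - ⌈α * (w : ℝ)⌉₊ + 1) + β := by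
  set k := ⌈α * (w : ℝ)⌉₊
  have hβh : 0 < β + h := by linarith
  have hwpos : (0 : ℝ) < w := by exact_mod_cast hw
  have hk1 : 1 ≤ k := Nat.one_le_ceil_iff.mpr (by positivity)
  have hkw : k ≤ w := Nat.ceil_le.mpr <| mul_le_of_le_one_left hwpos.le <|
    hαβ.trans (div_le_one_of_le₀ (by linarith) hβh.le)
  have hlower : ((w - k + 1 : ℕ) : ℝ) * a k ≤ ∑ i ∈ Icc 1 w, a i := by
    rw [← nsmul_eq_mul, show w - k + 1 = w + 1 - k by omega]
    exact card_nsmul_le_sum_Icc_of_monotoneOn hk1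
      (fun i hi => (haI i (mem_Icc.mp hi).1 (mem_Icc.mp hi).2).1)
      (fun i hi j hj hij => hamono i j hi.1 hij hj.2)
  have hupper : ∑ i ∈ Icc 1 w, b i ≤
      ((w - k + 1 : ℕ) : ℝ) * b (w - k + 1) + ((k - 1 : ℕ) : ℝ) * h := by
    rw [← nsmul_eq_mul, ← nsmul_eq_mul, show k - 1 = w - (w - k + 1) by omega]
    exact sum_Icc_le_nsmul_add_nsmul (by omega)
      (fun i hi => (hbI i (mem_Icc.mp hi).1 (mem_Icc.mp hi).2).2)
      (fun i hi j hj hij => hbmono i j hi.1 hij hj.2)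
  by_contra! hcon
  push_cast [Nat.cast_sub hkw, Nat.cast_sub hk1] at hlower hupper
  have hm : (0 : ℝ) ≤ w - k + 1 := by linarith [(Nat.cast_le (α := ℝ)).mpr hkw]
  have hsums : ((w : ℝ) - k + 1) * (b (w - k + 1) + β) ≤
      (w - k + 1) * b (w - k + 1) + (k - 1) * h :=
    (mul_le_mul_of_nonneg_left hcon hm).trans (by linarith)
  have hwβ : (w : ℝ) * β ≤ ((k : ℝ) - 1) * (β + h) := by linarith
  exact (ceil_mul_sub_one_mul_lt hα0.le hwpos hβh hαβ).not_ge hwβ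
end
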